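/- Assume in addition that every element of X is essentially bounded. Then there exists a constant C, depending only on X, such that for every η > 0 and all ρ₁, ρ₂ ∈ L^∞(D, μ) with ρ₁ ≥ η and ρ₂ ≥ η almost everywhere, the square-root-weighted operators satisfy ‖M[√ρ₁] − M[√ρ₂]‖_{L(X,X)} ≤ (C / (2√η)) ‖ρ₁ − ρ₂‖_{L²(D,μ)}, where M[√ρ] : X → X is defined by ⟨M[√ρ]v, w⟩_{L²} = ∫_D √ρ (v·w) dμ for all v, w ∈ X. -/

import Mathlib

/-!
Since `X` is finite-dimensional and consists of essentially bounded functions, the inclusion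
`X → L^∞` is a bounded linear map, so `‖v x‖ ≤ C ‖v‖` almost everywhere for every `v ∈ X`.
Testing `M[√ρ₁] - M[√ρ₂]` against `v, w ∈ X` gives `∫ (√ρ₁ - √ρ₂) ⟪v, w⟫`, which by this
pointwise bound and Cauchy–Schwarz is at most `C ‖v‖ ‖√ρ₁ - √ρ₂‖₂ ‖w‖`; finally
`|√a - √b| ≤ |a - b| / (2√η)` for `a, b ≥ η` turns `‖√ρ₁ - √ρ₂‖₂` into `‖ρ₁ - ρ₂‖₂ / (2√η)`.
-/

open MeasureTheory
open scoped RealInnerProductSpace ENNReal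

theorem Real.abs_sqrt_sub_sqrt_le {η a b : ℝ} (hη : 0 < η) (ha : η ≤ a) (hb : η ≤ b) :
    |√a - √b| ≤ |a - b| / (2 * √η) := by
  have hsa : √η ≤ √a := Real.sqrt_le_sqrt ha
  have hsb : √η ≤ √b := Real.sqrt_le_sqrt hb
  have hsη : 0 < √η := Real.sqrt_pos.mpr hη
  have hfactor : (√a - √b) * (√a + √b) = a - b := by
    nlinarith [Real.sq_sqrt (hη.le.trans ha), Real.sq_sqrt (hη.le.trans hb)]
  rw [le_div_iff₀ (by positivity), ← hfactor, abs_mul, abs_of_pos (by linarith : 0 < √a + √b)]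
  exact mul_le_mul_of_nonneg_left (by linarith) (abs_nonneg _)

theorem ContinuousLinearMap.opNorm_le_of_inner_le {F G : Type*} [NormedAddCommGroup F]
    [NormedSpace ℝ F] [NormedAddCommGroup G] [InnerProductSpace ℝ G] (T : F →L[ℝ] G) {K : ℝ}
    (hK : 0 ≤ K) (h : ∀ v w, ⟪T v, w⟫ ≤ K * ‖v‖ * ‖w‖) : ‖T‖ ≤ K := by
  refine T.opNorm_le_bound hK fun v ↦ ?_
  have hsq := h v (T v)
  rw [real_inner_self_eq_norm_sq] at hsq
  rcases (norm_nonneg (T v)).eq_or_lt with hzero | hpos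
  · rw [← hzero]
    positivity
  · exact le_of_mul_le_mul_right (by nlinarith) hpos

namespace MeasureTheory

variable {α : Type*} [MeasurableSpace α] {μ : Measure α}

theorem Lp.ae_norm_le_norm_top {E : Type*} [NormedAddCommGroup E] (f : Lp E ∞ μ) :
    ∀ᵐ x ∂μ, ‖f x‖ ≤ ‖f‖ := by
  filter_upwards [enorm_ae_le_eLpNormEssSup f μ] with x hx
  rw [Lp.norm_def, eLpNorm_exponent_top, ← toReal_enorm]
  exact ENNReal.toReal_mono (by simpa using Lp.eLpNorm_ne_top f) hx

theorem MemLp.sqrt {f : α → ℝ} (hf : MemLp f ∞ μ) : MemLp (fun x ↦ √(f x)) ∞ μ := by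
  have hdom : MemLp (fun x ↦ 1 + |f x|) ∞ μ := (memLp_top_const (1 : ℝ)).add hf.abs
  refine hdom.of_le (Real.continuous_sqrt.comp_aestronglyMeasurable hf.1) (.of_forall fun x ↦ ?_)
  rw [Real.norm_of_nonneg (Real.sqrt_nonneg _), Real.norm_of_nonneg (by positivity),
    Real.sqrt_le_iff]
  constructor
  · positivity
  · nlinarith [le_abs_self (f x), abs_nonneg (f x)]

theorem rpow_integral_sq_le_of_ae_abs_le {f g : α → ℝ} {c : ℝ} (hc : 0 ≤ c) (hg : MemLp g 2 μ)
    (hfg : ∀ᵐ x ∂μ, |f x| ≤ c * |g x|) :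
    (∫ x, f x ^ 2 ∂μ) ^ (1 / 2 : ℝ) ≤ c * (∫ x, g x ^ 2 ∂μ) ^ (1 / 2 : ℝ) := by
  have hsq : ∫ x, f x ^ 2 ∂μ ≤ c ^ 2 * ∫ x, g x ^ 2 ∂μ := by
    rw [← integral_const_mul]
    refine integral_mono_of_nonneg (.of_forall fun x ↦ sq_nonneg _)
      (hg.integrable_sq.const_mul _) ?_
    filter_upwards [hfg] with x hx
    rw [← mul_pow, ← sq_abs (f x), ← sq_abs (c * g x), abs_mul, abs_of_nonneg hc]
    exact pow_le_pow_left₀ (abs_nonneg _) hx 2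
  simp_rw [← Real.sqrt_eq_rpow]
  calc √(∫ x, f x ^ 2 ∂μ) ≤ √(c ^ 2 * ∫ x, g x ^ 2 ∂μ) := Real.sqrt_le_sqrt hsq
    _ = c * √(∫ x, g x ^ 2 ∂μ) := by rw [Real.sqrt_mul' _ (integral_nonneg fun x ↦ sq_nonneg _),
      Real.sqrt_sq hc]

section InnerProduct

variable {E : Type*} [NormedAddCommGroup E] [InnerProductSpace ℝ E]

theorem L2.norm_eq_integral_norm_sq_rpow (w : Lp E 2 μ) :
    ‖w‖ = (∫ x, ‖w x‖ ^ 2 ∂μ) ^ (1 / 2 : ℝ) := by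
  simp_rw [← Real.sqrt_eq_rpow, ← real_inner_self_eq_norm_sq, ← L2.inner_def]
  rw [real_inner_self_eq_norm_sq, Real.sqrt_sq (norm_nonneg w)]

theorem integral_mul_le_rpow_integral_sq_mul_norm {g : α → ℝ} (hg : MemLp g 2 μ) (w : Lp E 2 μ) :
    ∫ x, |g x| * ‖w x‖ ∂μ ≤ (∫ x, g x ^ 2 ∂μ) ^ (1 / 2 : ℝ) * ‖w‖ := by
  have hw : MemLp (fun x ↦ ‖w x‖) 2 μ := (Lp.memLp w).norm
  have := integral_mul_le_Lp_mul_Lq_of_nonneg Real.HolderConjugate.two_two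
    (.of_forall fun x ↦ abs_nonneg (g x)) (.of_forall fun x ↦ norm_nonneg (w x))
    (by simpa using hg.norm) (by simpa using hw)
  simpa [L2.norm_eq_integral_norm_sq_rpow, Real.rpow_two, sq_abs] using this

theorem abs_integral_mul_inner_le {g : α → ℝ} (hg : MemLp g 2 μ) {v : Lp E 2 μ} {B : ℝ}
    (hB : 0 ≤ B) (hv : ∀ᵐ x ∂μ, ‖v x‖ ≤ B) (w : Lp E 2 μ) :
    |∫ x, g x * ⟪v x, w x⟫ ∂μ| ≤ B * (∫ x, g x ^ 2 ∂μ) ^ (1 / 2 : ℝ) * ‖w‖ := by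
  have hdom : Integrable (fun x ↦ |g x| * ‖w x‖) μ :=
    hg.abs.integrable_mul (Lp.memLp w).norm
  calc |∫ x, g x * ⟪v x, w x⟫ ∂μ|
      ≤ ∫ x, |g x * ⟪v x, w x⟫| ∂μ := abs_integral_le_integral_abs
    _ ≤ ∫ x, B * (|g x| * ‖w x‖) ∂μ := by
      refine integral_mono_of_nonneg (.of_forall fun x ↦ abs_nonneg _) (hdom.const_mul B) ?_
      filter_upwards [hv] with x hvx
      calc |g x * ⟪v x, w x⟫| = |g x| * |⟪v x, w x⟫| := abs_mul _ _
        _ ≤ |g x| * (B * ‖w x‖) := by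
          gcongr
          exact (abs_real_inner_le_norm _ _).trans (by gcongr)
        _ = B * (|g x| * ‖w x‖) := by ring
    _ ≤ B * ((∫ x, g x ^ 2 ∂μ) ^ (1 / 2 : ℝ) * ‖w‖) := by
      rw [integral_const_mul]
      exact mul_le_mul_of_nonneg_left (integral_mul_le_rpow_integral_sq_mul_norm hg w) hB
    _ = B * (∫ x, g x ^ 2 ∂μ) ^ (1 / 2 : ℝ) * ‖w‖ := by ring

end InnerProduct

end MeasureTheory

section EssentiallyBoundedSubspace

variable {α : Type*} [MeasurableSpace α] {μ : Measure α}
  {𝕜 E : Type*} [NontriviallyNormedField 𝕜] [NormedAddCommGroup E] [NormedSpace 𝕜 E]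
  {p : ℝ≥0∞} [Fact (1 ≤ p)] (X : Submodule 𝕜 (Lp E p μ))

noncomputable def Submodule.toLpTop (hX : ∀ v : X, MemLp ((v : Lp E p μ) : α → E) ∞ μ) :
    X →ₗ[𝕜] Lp E ∞ μ where
  toFun v := (hX v).toLp _
  map_add' v w := Lp.ext <| by
    filter_upwards [(hX (v + w)).coeFn_toLp, Lp.coeFn_add ((hX v).toLp _) ((hX w).toLp _),
      (hX v).coeFn_toLp, (hX w).coeFn_toLp, Lp.coeFn_add (v : Lp E p μ) w] with x h hsum hv hw hvw
    rw [h, hsum, Pi.add_apply, hv, hw]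
    exact hvw
  map_smul' c v := Lp.ext <| by
    filter_upwards [(hX (c • v)).coeFn_toLp, Lp.coeFn_smul c ((hX v).toLp _),
      (hX v).coeFn_toLp, Lp.coeFn_smul c (v : Lp E p μ)] with x h hc hv hcv
    rw [h, RingHom.id_apply, hc, Pi.smul_apply, hv]
    exact hcv

theorem Submodule.exists_ae_norm_le_mul_norm [CompleteSpace 𝕜] [FiniteDimensional 𝕜 X]
    (hX : ∀ v : X, MemLp ((v : Lp E p μ) : α → E) ∞ μ) :
    ∃ C, 0 ≤ C ∧ ∀ v : X, ∀ᵐ x ∂μ, ‖(v : Lp E p μ) x‖ ≤ C * ‖v‖ := by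
  obtain ⟨C, hC, hbound⟩ := SemilinearMapClass.bound_of_continuous (X.toLpTop hX)
    (X.toLpTop hX).continuous_of_finiteDimensional
  refine ⟨C, hC.le, fun v ↦ ?_⟩
  filter_upwards [(hX v).coeFn_toLp, Lp.ae_norm_le_norm_top ((hX v).toLp _)] with x hv hle
  rw [← hv]
  exact hle.trans (hbound v)

end EssentiallyBoundedSubspace

/-- Let `X` be a finite-dimensional subspace of `L²(D, μ; ℝ³)` whose elements
are all essentially bounded. Then there is a constant `C` (depending only on `X`) such that
for every `η > 0` and all `ρ₁, ρ₂ ∈ L^∞` with `ρ₁, ρ₂ ≥ η` a.e., the square-root-weighted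
operators `M[√ρᵢ] : X → X`, determined by `⟪M[√ρ]v, w⟫_{L²} = ∫ √ρ (v·w) dμ`, satisfy
`‖M[√ρ₁] − M[√ρ₂]‖_{L(X,X)} ≤ (C / (2√η)) ‖ρ₁ − ρ₂‖_{L²(D,μ)}`. -/
theorem stmt_4 {D : Type*} [MeasurableSpace D] (μ : Measure D) [IsFiniteMeasure μ]
    (X : Submodule ℝ (Lp (EuclideanSpace ℝ (Fin 3)) 2 μ)) [FiniteDimensional ℝ X]
    (hX_bdd : ∀ v : X, MemLp (((v : X) : Lp (EuclideanSpace ℝ (Fin 3)) 2 μ) : D → EuclideanSpace ℝ (Fin 3)) ⊤ μ) :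
    ∃ C : ℝ, ∀ η : ℝ, 0 < η → ∀ ρ₁ ρ₂ : D → ℝ,
      Measurable ρ₁ → Measurable ρ₂ → MemLp ρ₁ ⊤ μ → MemLp ρ₂ ⊤ μ →
      (∀ᵐ x ∂μ, η ≤ ρ₁ x) → (∀ᵐ x ∂μ, η ≤ ρ₂ x) →
      ∀ M₁ M₂ : X →L[ℝ] X,
        (∀ v w : X,
          ⟪((M₁ v : X) : Lp (EuclideanSpace ℝ (Fin 3)) 2 μ),
              ((w : X) : Lp (EuclideanSpace ℝ (Fin 3)) 2 μ)⟫
            = ∫ x, Real.sqrt (ρ₁ x) * ⟪((v : X) : Lp (EuclideanSpace ℝ (Fin 3)) 2 μ) x,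
                ((w : X) : Lp (EuclideanSpace ℝ (Fin 3)) 2 μ) x⟫ ∂μ) →
        (∀ v w : X,
          ⟪((M₂ v : X) : Lp (EuclideanSpace ℝ (Fin 3)) 2 μ),
              ((w : X) : Lp (EuclideanSpace ℝ (Fin 3)) 2 μ)⟫
            = ∫ x, Real.sqrt (ρ₂ x) * ⟪((v : X) : Lp (EuclideanSpace ℝ (Fin 3)) 2 μ) x,
                ((w : X) : Lp (EuclideanSpace ℝ (Fin 3)) 2 μ) x⟫ ∂μ) →
        ‖M₁ - M₂‖ ≤ (C / (2 * Real.sqrt η)) *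
          (∫ x, (ρ₁ x - ρ₂ x) ^ 2 ∂μ) ^ ((1 : ℝ) / 2) := by
  obtain ⟨C, hC, hX_bound⟩ := X.exists_ae_norm_le_mul_norm hX_bdd
  refine ⟨C, fun η hη ρ₁ ρ₂ _ _ hρ₁ hρ₂ hη₁ hη₂ M₁ M₂ hM₁ hM₂ ↦ ?_⟩
  set g : D → ℝ := fun x ↦ √(ρ₁ x) - √(ρ₂ x)
  have hg : MemLp g 2 μ := (hρ₁.sqrt.sub hρ₂.sqrt).mono_exponent le_top
  have hr : MemLp (fun x ↦ ρ₁ x - ρ₂ x) 2 μ := (hρ₁.sub hρ₂).mono_exponent le_top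
  have hgr : ∀ᵐ x ∂μ, |g x| ≤ (2 * √η)⁻¹ * |ρ₁ x - ρ₂ x| := by
    filter_upwards [hη₁, hη₂] with x h₁ h₂
    rw [← div_eq_inv_mul]
    exact Real.abs_sqrt_sub_sqrt_le hη h₁ h₂
  have hdiff : ∀ v w : X, ⟪(M₁ - M₂) v, w⟫ = ∫ x, g x * ⟪v.1 x, w.1 x⟫ ∂μ := by
    intro v w
    have hint : ∀ ρ : D → ℝ, MemLp ρ ⊤ μ → Integrable (fun x ↦ √(ρ x) * ⟪v.1 x, w.1 x⟫) μ :=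
      fun ρ hρ ↦ (L2.integrable_inner (𝕜 := ℝ) v.1 w.1).mul_of_top_right hρ.sqrt
    rw [sub_apply, inner_sub_left, Submodule.coe_inner, Submodule.coe_inner,
      hM₁, hM₂, ← integral_sub (hint ρ₁ hρ₁) (hint ρ₂ hρ₂)]
    simp only [g, sub_mul]
  refine ContinuousLinearMap.opNorm_le_of_inner_le _ (by positivity) fun v w ↦ ?_
  calc ⟪(M₁ - M₂) v, w⟫ ≤ |∫ x, g x * ⟪v.1 x, w.1 x⟫ ∂μ| :=
        (hdiff v w).trans_le (le_abs_self _)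
    _ ≤ C * ‖v‖ * (∫ x, g x ^ 2 ∂μ) ^ (1 / 2 : ℝ) * ‖w‖ :=
        abs_integral_mul_inner_le hg (by positivity) (hX_bound v) _
    _ ≤ C * ‖v‖ * ((2 * √η)⁻¹ * (∫ x, (ρ₁ x - ρ₂ x) ^ 2 ∂μ) ^ (1 / 2 : ℝ)) * ‖w‖ := by
        gcongr
        exact rpow_integral_sq_le_of_ae_abs_le (by positivity) hr hgr
    _ = C / (2 * √η) * (∫ x, (ρ₁ x - ρ₂ x) ^ 2 ∂μ) ^ (1 / 2 : ℝ) * ‖v‖ * ‖w‖ := by ring
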